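/- arXiv:2303.09469 — 2 statements merged into one kernel-verified Lean document; each statement's English description precedes it below -/
import Mathlib

section
/- Let T ∈ 𝒯 be L-Lipschitz, let U ∈ 𝒯, and let α₁, α₂ ∈ [0,1]. Then ‖T ∘ [α₁U]⁻¹ − T ∘ [α₂U]⁻¹‖₂ ≤ C·L·|α₁ − α₂|^{1/2} for a universal constant C. -/
open MeasureTheory

noncomputable section

/-- The class 𝒯 of continuous strictly increasing bijections of `[0,1]` fixing `0` and `1`. -/
def InT (T : ℝ → ℝ) : Prop :=
  ContinuousOn T (Set.Icc 0 1) ∧ StrictMonoOn T (Set.Icc 0 1) ∧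
    Set.MapsTo T (Set.Icc 0 1) (Set.Icc 0 1) ∧ T 0 = 0 ∧ T 1 = 1

/-- The inverse bijection of `T ∈ 𝒯` (on `[0,1]`). -/
def tinv (T : ℝ → ℝ) : ℝ → ℝ := Function.invFunOn T (Set.Icc 0 1)

/-- The α-contraction `[αT]`. -/
def contr (α : ℝ) (T : ℝ → ℝ) (x : ℝ) : ℝ :=
  if 0 ≤ α then x + α * (T x - x) else x + α * (x - tinv T x)

/-- The L²([0,1]) distance between two maps. -/
def l2dist (f g : ℝ → ℝ) : ℝ := Real.sqrt (∫ x in (0:ℝ)..1, (f x - g x)^2)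

/-!
Put `Gᵢ = [αᵢU]` and `ε = |α₁ - α₂|`. Both `Gᵢ` lie in `𝒯` and `|G₁ - G₂| ≤ ε`, so `G₁⁻¹ y` and
`G₂⁻¹ y` are both squeezed between `G₂⁻¹ (y - ε)` and `G₂⁻¹ (y + ε)`, where `G₂⁻¹` is extended to
`ℝ` by the constants `0` and `1`. Since that interval has length at most `1`, the Lipschitz bound
gives `(T (G₁⁻¹ y) - T (G₂⁻¹ y))² ≤ L² (G₂⁻¹ (y + ε) - G₂⁻¹ (y - ε))`, and the integral over `[0,1]`
of this increment of a function with values in `[0,1]` is at most `2ε`: after the change of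
variables only two end pieces of length `2ε` survive. Hence `‖T∘G₁⁻¹ - T∘G₂⁻¹‖₂² ≤ 2 L² ε`.
-/

open Set

def tinvExt (G : ℝ → ℝ) (t : ℝ) : ℝ := tinv G (projIcc 0 1 zero_le_one t)

lemma tinvExt_of_mem {G : ℝ → ℝ} {y : ℝ} (hy : y ∈ Icc (0:ℝ) 1) : tinvExt G y = tinv G y := by
  rw [tinvExt, projIcc_of_mem zero_le_one hy]

namespace InT

variable {G : ℝ → ℝ}

lemma surjOn (hG : InT G) : SurjOn G (Icc 0 1) (Icc 0 1) := by
  have := intermediate_value_Icc zero_le_one hG.1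
  rwa [hG.2.2.2.1, hG.2.2.2.2] at this

lemma tinv_mem (hG : InT G) {y : ℝ} (hy : y ∈ Icc (0:ℝ) 1) : tinv G y ∈ Icc (0:ℝ) 1 :=
  Function.invFunOn_mem (hG.surjOn hy)

lemma apply_tinv (hG : InT G) {y : ℝ} (hy : y ∈ Icc (0:ℝ) 1) : G (tinv G y) = y :=
  Function.invFunOn_eq (hG.surjOn hy)

lemma tinv_le_iff (hG : InT G) {x y : ℝ} (hy : y ∈ Icc (0:ℝ) 1) (hx : x ∈ Icc (0:ℝ) 1) :
    tinv G y ≤ x ↔ y ≤ G x := by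
  rw [← hG.2.1.le_iff_le (hG.tinv_mem hy) hx, hG.apply_tinv hy]

lemma le_tinv_iff (hG : InT G) {x y : ℝ} (hy : y ∈ Icc (0:ℝ) 1) (hx : x ∈ Icc (0:ℝ) 1) :
    x ≤ tinv G y ↔ G x ≤ y := by
  rw [← hG.2.1.le_iff_le hx (hG.tinv_mem hy), hG.apply_tinv hy]

lemma monotoneOn_tinv (hG : InT G) : MonotoneOn (tinv G) (Icc 0 1) := fun _ hy z hz hyz =>
  (hG.tinv_le_iff hy (hG.tinv_mem hz)).2 (by rwa [hG.apply_tinv hz])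

lemma tinv_zero (hG : InT G) : tinv G 0 = 0 :=
  le_antisymm ((hG.tinv_le_iff (left_mem_Icc.2 zero_le_one) (left_mem_Icc.2 zero_le_one)).2
    hG.2.2.2.1.ge) (hG.tinv_mem (left_mem_Icc.2 zero_le_one)).1

lemma tinv_one (hG : InT G) : tinv G 1 = 1 :=
  le_antisymm (hG.tinv_mem (right_mem_Icc.2 zero_le_one)).2
    ((hG.le_tinv_iff (right_mem_Icc.2 zero_le_one) (right_mem_Icc.2 zero_le_one)).2
      hG.2.2.2.2.le)

lemma tinvExt_mem (hG : InT G) (t : ℝ) : tinvExt G t ∈ Icc (0:ℝ) 1 :=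
  hG.tinv_mem (projIcc 0 1 zero_le_one t).2

lemma monotone_tinvExt (hG : InT G) : Monotone (tinvExt G) := fun _ _ hst =>
  hG.monotoneOn_tinv (projIcc 0 1 zero_le_one _).2 (projIcc 0 1 zero_le_one _).2
    (monotone_projIcc zero_le_one hst)

lemma tinvExt_of_nonpos (hG : InT G) {t : ℝ} (ht : t ≤ 0) : tinvExt G t = 0 := by
  rw [tinvExt, projIcc_of_le_left zero_le_one ht]
  exact hG.tinv_zero

lemma tinvExt_of_one_le (hG : InT G) {t : ℝ} (ht : 1 ≤ t) : tinvExt G t = 1 := by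
  rw [tinvExt, projIcc_of_right_le zero_le_one ht]
  exact hG.tinv_one

end InT

lemma inT_contr {U : ℝ → ℝ} (hU : InT U) {α : ℝ} (hα : α ∈ Icc (0:ℝ) 1) : InT (contr α U) := by
  obtain ⟨hα0, hα1⟩ := hα
  have heq : contr α U = fun x => x + α * (U x - x) := funext fun x => if_pos hα0
  rw [heq]
  refine ⟨continuousOn_id.add (continuousOn_const.mul (hU.1.sub continuousOn_id)), ?_, ?_, ?_, ?_⟩
  · intro x hx y hy hxy
    have hUxy := hU.2.1 hx hy hxy
    dsimp only
    rcases hα1.lt_or_eq with hα1 | rfl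
    · nlinarith [mul_nonneg hα0 (sub_pos.2 hUxy).le]
    · linarith
  · intro x hx
    have := hU.2.2.1 hx
    constructor <;> nlinarith [hx.1, hx.2, this.1, this.2]
  · simp [hU.2.2.2.1]
  · simp [hU.2.2.2.2]

lemma abs_contr_sub_contr_le {U : ℝ → ℝ} {α₁ α₂ x : ℝ} (hα₁ : 0 ≤ α₁) (hα₂ : 0 ≤ α₂)
    (hx : x ∈ Icc (0:ℝ) 1) (hUx : U x ∈ Icc (0:ℝ) 1) :
    |contr α₁ U x - contr α₂ U x| ≤ |α₁ - α₂| := by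
  have hdiff : contr α₁ U x - contr α₂ U x = (α₁ - α₂) * (U x - x) := by
    rw [contr, contr, if_pos hα₁, if_pos hα₂]; ring
  rw [hdiff, abs_mul]
  exact mul_le_of_le_one_right (abs_nonneg _) (Real.dist_le_of_mem_Icc_01 hUx hx)

lemma tinv_mem_Icc_tinvExt {G₁ G₂ : ℝ → ℝ} (hG₁ : InT G₁) (hG₂ : InT G₂) {ε : ℝ} (hε : 0 ≤ ε)
    (hclose : ∀ x ∈ Icc (0:ℝ) 1, |G₁ x - G₂ x| ≤ ε) {y : ℝ} (hy : y ∈ Icc (0:ℝ) 1) :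
    tinv G₁ y ∈ Icc (tinvExt G₂ (y - ε)) (tinvExt G₂ (y + ε)) := by
  constructor
  · rcases le_or_gt 0 (y - ε) with h | h
    · have hmem : y - ε ∈ Icc (0:ℝ) 1 := ⟨h, by linarith [hy.2]⟩
      have := (abs_le.mp (hclose _ (hG₂.tinv_mem hmem))).2
      rw [hG₂.apply_tinv hmem] at this
      rw [tinvExt_of_mem hmem, hG₁.le_tinv_iff hy (hG₂.tinv_mem hmem)]
      linarith
    · rw [hG₂.tinvExt_of_nonpos h.le]
      exact (hG₁.tinv_mem hy).1
  · rcases le_or_gt (y + ε) 1 with h | h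
    · have hmem : y + ε ∈ Icc (0:ℝ) 1 := ⟨by linarith [hy.1], h⟩
      have := (abs_le.mp (hclose _ (hG₂.tinv_mem hmem))).1
      rw [hG₂.apply_tinv hmem] at this
      rw [tinvExt_of_mem hmem, hG₁.tinv_le_iff hy (hG₂.tinv_mem hmem)]
      linarith
    · rw [hG₂.tinvExt_of_one_le h.le]
      exact (hG₁.tinv_mem hy).2

lemma integral_comp_add_sub_comp_sub_le {H : ℝ → ℝ} (hH : LocallyIntegrable H) {m M ε : ℝ}
    (hm : ∀ t, m ≤ H t) (hM : ∀ t, H t ≤ M) (hε : 0 ≤ ε) (a b : ℝ) :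
    ∫ y in a..b, (H (y + ε) - H (y - ε)) ≤ 2 * ε * (M - m) := by
  have hint : ∀ c d : ℝ, IntervalIntegrable H volume c d := fun c d =>
    (hH.integrableOn_isCompact isCompact_uIcc).intervalIntegrable
  have hplus : ∫ y in a..b, H (y + ε) = (∫ y in a + ε..b - ε, H y) + ∫ y in b - ε..b + ε, H y := by
    rw [intervalIntegral.integral_comp_add_right,
      intervalIntegral.integral_add_adjacent_intervals (hint _ _) (hint _ _)]
  have hminus :
      ∫ y in a..b, H (y - ε) = (∫ y in a - ε..a + ε, H y) + ∫ y in a + ε..b - ε, H y := by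
    rw [intervalIntegral.integral_comp_sub_right,
      intervalIntegral.integral_add_adjacent_intervals (hint _ _) (hint _ _)]
  have hupper : ∫ y in b - ε..b + ε, H y ≤ 2 * ε * M :=
    calc ∫ y in b - ε..b + ε, H y ≤ ∫ _ in b - ε..b + ε, M :=
          intervalIntegral.integral_mono_on (by linarith) (hint _ _) intervalIntegrable_const
            fun t _ => hM t
      _ = 2 * ε * M := by simp only [intervalIntegral.integral_const, smul_eq_mul]; ring
  have hlower : 2 * ε * m ≤ ∫ y in a - ε..a + ε, H y :=
    calc 2 * ε * m = ∫ _ in a - ε..a + ε, m := by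
          simp only [intervalIntegral.integral_const, smul_eq_mul]; ring
      _ ≤ ∫ y in a - ε..a + ε, H y :=
          intervalIntegral.integral_mono_on (by linarith) intervalIntegrable_const (hint _ _)
            fun t _ => hm t
  have hplus_int : IntervalIntegrable (fun y => H (y + ε)) volume a b := by
    simpa using (hint (a + ε) (b + ε)).comp_add_right ε
  have hminus_int : IntervalIntegrable (fun y => H (y - ε)) volume a b := by
    simpa using (hint (a - ε) (b - ε)).comp_sub_right ε
  rw [intervalIntegral.integral_sub hplus_int hminus_int, hplus, hminus]
  linarith

lemma sq_sub_comp_tinv_le {T G₁ G₂ : ℝ → ℝ} {L ε : ℝ}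
    (hT : ∀ x ∈ Icc (0:ℝ) 1, ∀ y ∈ Icc (0:ℝ) 1, |T x - T y| ≤ L * |x - y|)
    (hG₁ : InT G₁) (hG₂ : InT G₂) (hε : 0 ≤ ε)
    (hclose : ∀ x ∈ Icc (0:ℝ) 1, |G₁ x - G₂ x| ≤ ε) {y : ℝ} (hy : y ∈ Icc (0:ℝ) 1) :
    (T (tinv G₁ y) - T (tinv G₂ y)) ^ 2 ≤ L ^ 2 * (tinvExt G₂ (y + ε) - tinvExt G₂ (y - ε)) := by
  set w := tinvExt G₂ (y + ε) - tinvExt G₂ (y - ε)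
  have h₁ := tinv_mem_Icc_tinvExt hG₁ hG₂ hε hclose hy
  have h₂ := tinv_mem_Icc_tinvExt hG₂ hG₂ hε (fun x _ => by simpa using hε) hy
  have hdist : |tinv G₁ y - tinv G₂ y| ≤ w := Real.dist_le_of_mem_Icc h₁ h₂
  have hw : w ≤ 1 := by linarith [(hG₂.tinvExt_mem (y + ε)).2, (hG₂.tinvExt_mem (y - ε)).1]
  have hlip := hT _ (hG₁.tinv_mem hy) _ (hG₂.tinv_mem hy)
  calc (T (tinv G₁ y) - T (tinv G₂ y)) ^ 2 ≤ (L * |tinv G₁ y - tinv G₂ y|) ^ 2 := by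
        rw [← sq_abs]; exact pow_le_pow_left₀ (abs_nonneg _) hlip 2
    _ = L ^ 2 * |tinv G₁ y - tinv G₂ y| ^ 2 := mul_pow _ _ _
    _ ≤ L ^ 2 * w ^ 2 := by gcongr
    _ ≤ L ^ 2 * w := by gcongr; exact pow_le_of_le_one ((abs_nonneg _).trans hdist) hw two_ne_zero

lemma integral_sq_sub_comp_tinv_le {T G₁ G₂ : ℝ → ℝ} {L ε : ℝ}
    (hT : ∀ x ∈ Icc (0:ℝ) 1, ∀ y ∈ Icc (0:ℝ) 1, |T x - T y| ≤ L * |x - y|)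
    (hG₁ : InT G₁) (hG₂ : InT G₂) (hε : 0 ≤ ε)
    (hclose : ∀ x ∈ Icc (0:ℝ) 1, |G₁ x - G₂ x| ≤ ε) :
    ∫ y in (0:ℝ)..1, (T (tinv G₁ y) - T (tinv G₂ y)) ^ 2 ≤ 2 * L ^ 2 * ε := by
  have hH := hG₂.monotone_tinvExt
  have hint : IntervalIntegrable
      (fun y => L ^ 2 * (tinvExt G₂ (y + ε) - tinvExt G₂ (y - ε))) volume 0 1 :=
    (((hH.comp (monotone_id.add_const ε)).intervalIntegrable).sub
      ((hH.comp (f := fun y => y - ε) fun _ _ h => sub_le_sub_right h ε).intervalIntegrable)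
      ).const_mul _
  calc ∫ y in (0:ℝ)..1, (T (tinv G₁ y) - T (tinv G₂ y)) ^ 2
      ≤ ∫ y in (0:ℝ)..1, L ^ 2 * (tinvExt G₂ (y + ε) - tinvExt G₂ (y - ε)) := by
        rw [intervalIntegral.integral_of_le zero_le_one,
          intervalIntegral.integral_of_le zero_le_one]
        exact integral_mono_of_nonneg (ae_of_all _ fun y => sq_nonneg _) hint.1
          (ae_restrict_of_forall_mem measurableSet_Ioc fun y hy =>
            sq_sub_comp_tinv_le hT hG₁ hG₂ hε hclose (Ioc_subset_Icc_self hy))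
    _ = L ^ 2 * ∫ y in (0:ℝ)..1, (tinvExt G₂ (y + ε) - tinvExt G₂ (y - ε)) :=
        intervalIntegral.integral_const_mul _ _
    _ ≤ L ^ 2 * (2 * ε * (1 - 0)) := by
        gcongr
        exact integral_comp_add_sub_comp_sub_le hH.locallyIntegrable
          (fun t => (hG₂.tinvExt_mem t).1) (fun t => (hG₂.tinvExt_mem t).2) hε 0 1
    _ = 2 * L ^ 2 * ε := by ring

/-- there is a universal constant `C` such that for `T ∈ 𝒯` `L`-Lipschitz,
`U ∈ 𝒯`, and `α₁, α₂ ∈ [0,1]`: `‖T∘[α₁U]⁻¹ − T∘[α₂U]⁻¹‖₂ ≤ C L |α₁ − α₂|^{1/2}`. -/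
theorem composition_inverse_holder : ∃ C : ℝ, 0 < C ∧
    ∀ (L : ℝ) (T U : ℝ → ℝ) (α₁ α₂ : ℝ), InT T → InT U →
      (∀ x ∈ Set.Icc (0:ℝ) 1, ∀ y ∈ Set.Icc (0:ℝ) 1, |T x - T y| ≤ L * |x - y|) →
      α₁ ∈ Set.Icc (0:ℝ) 1 → α₂ ∈ Set.Icc (0:ℝ) 1 →
      l2dist (fun x => T (tinv (contr α₁ U) x)) (fun x => T (tinv (contr α₂ U) x))
        ≤ C * L * Real.sqrt |α₁ - α₂| := by
  refine ⟨Real.sqrt 2, by positivity, fun L T U α₁ α₂ _ hU hT hα₁ hα₂ => ?_⟩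
  have hL : 0 ≤ L := by
    simpa using (abs_nonneg _).trans
      (hT 1 (right_mem_Icc.2 zero_le_one) 0 (left_mem_Icc.2 zero_le_one))
  have hclose : ∀ x ∈ Icc (0:ℝ) 1, |contr α₁ U x - contr α₂ U x| ≤ |α₁ - α₂| := fun x hx =>
    abs_contr_sub_contr_le hα₁.1 hα₂.1 hx (hU.2.2.1 hx)
  calc l2dist _ _ ≤ Real.sqrt (2 * L ^ 2 * |α₁ - α₂|) :=
        Real.sqrt_le_sqrt (integral_sq_sub_comp_tinv_le hT (inT_contr hU hα₁) (inT_contr hU hα₂)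
          (abs_nonneg _) hclose)
    _ = Real.sqrt 2 * L * Real.sqrt |α₁ - α₂| := by
        rw [Real.sqrt_mul' _ (abs_nonneg _), Real.sqrt_mul' _ (sq_nonneg L), Real.sqrt_sq hL]
end
end

section
/- Let 0 < L_l ≤ L_u < ∞, 𝒯_{l,u} = {T ∈ 𝒯 : T differentiable with L_l ≤ T′ ≤ L_u}, α ∈ [−1,0), S ∈ 𝒯 be L_S-Lipschitz, and let T_ε be a random element of 𝒯 with E|T_ε(x) − T_ε(y)|² ≤ L_ε²|x−y|² for all x,y ∈ [0,1]. Then for all Q, T ∈ 𝒯_{l,u}: E‖T_ε∘S∘[αQ] − T_ε∘S∘[αT]‖₂² ≤ α²·L_S²·L_ε²·(L_u/L_l)²·‖Q − T‖₂². -/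
open MeasureTheory

noncomputable section

/-! For `α < 0` the contractions differ by `[αQ] x - [αT] x = α (T⁻¹ x - Q⁻¹ x)`, so after the
mean-square Lipschitz bound of `T_ε` (moved inside the `x`-integral by Fubini) and the Lipschitz
bound of `S` it remains to compare `‖Q⁻¹ - T⁻¹‖₂` with `‖Q - T‖₂`. Writing `u = Q⁻¹ x`, we have
`|Q u - T u| = |T (T⁻¹ x) - T u| ≥ L_l |T⁻¹ x - u|`, and the substitution `x = Q u`,
`dx = Q' u du ≤ L_u du` gives `L_l² ‖Q⁻¹ - T⁻¹‖₂² ≤ L_u ‖Q - T‖₂²`; finally `L_u ≥ 1` since `Q`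
maps `[0,1]` onto itself. -/

open Set

lemma Convex.mul_sub_le_sub_of_le_hasDerivWithinAt {D : Set ℝ} (hD : Convex ℝ D)
    {f f' : ℝ → ℝ} {L : ℝ} (hf : ∀ x ∈ D, HasDerivWithinAt f (f' x) D x)
    (hL : ∀ x ∈ D, L ≤ f' x) : ∀ u ∈ D, ∀ v ∈ D, u ≤ v → L * (v - u) ≤ f v - f u := by
  have hf_int : ∀ x ∈ interior D, HasDerivAt f (f' x) x := fun x hx =>
    (hf x (interior_subset hx)).hasDerivAt (mem_interior_iff_mem_nhds.1 hx)
  refine hD.mul_sub_le_image_sub_of_le_deriv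
    (fun x hx => (hf x hx).continuousWithinAt)
    (fun x hx => (hf_int x hx).differentiableAt.differentiableWithinAt) fun x hx => ?_
  rw [(hf_int x hx).deriv]
  exact hL x (interior_subset hx)

lemma mul_abs_sub_le_abs_sub {f : ℝ → ℝ} {s : Set ℝ} {L : ℝ}
    (hf : ∀ u ∈ s, ∀ v ∈ s, u ≤ v → L * (v - u) ≤ f v - f u)
    {u v : ℝ} (hu : u ∈ s) (hv : v ∈ s) : L * |v - u| ≤ |f v - f u| := by
  rcases le_total u v with huv | hvu
  · rw [abs_of_nonneg (sub_nonneg.2 huv)]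
    exact (hf u hu v hv huv).trans (le_abs_self _)
  · rw [abs_sub_comm, abs_sub_comm (f v), abs_of_nonneg (sub_nonneg.2 hvu)]
    exact (hf v hv u hu hvu).trans (le_abs_self _)

lemma integrableOn_sq_sub_of_monotoneOn {f g : ℝ → ℝ} {s : Set ℝ} (hs : MeasurableSet s)
    (hs_fin : volume s < ⊤) (hf : MonotoneOn f s) (hg : MonotoneOn g s)
    (hfs : MapsTo f s (Icc 0 1)) (hgs : MapsTo g s (Icc 0 1)) :
    IntegrableOn (fun x => (f x - g x) ^ 2) s := by
  refine IntegrableOn.of_bound hs_fin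
    (((aemeasurable_restrict_of_monotoneOn hs hf).sub
      (aemeasurable_restrict_of_monotoneOn hs hg)).pow_const 2).aestronglyMeasurable 1 ?_
  filter_upwards [ae_restrict_mem hs] with x hx
  obtain ⟨hf0, hf1⟩ := hfs hx
  obtain ⟨hg0, hg1⟩ := hgs hx
  rw [Real.norm_eq_abs, abs_of_nonneg (sq_nonneg _)]
  nlinarith

lemma contr_of_neg {α : ℝ} (hα : α < 0) (T : ℝ → ℝ) (x : ℝ) :
    contr α T x = x + α * (x - tinv T x) :=
  if_neg hα.not_ge

lemma contr_sub_contr {α : ℝ} (hα : α < 0) (Q T : ℝ → ℝ) (x : ℝ) :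
    contr α Q x - contr α T x = α * (tinv T x - tinv Q x) := by
  rw [contr_of_neg hα, contr_of_neg hα]
  ring

namespace InT

variable {T : ℝ → ℝ} {x α : ℝ}

lemma image_Icc (hT : InT T) : T '' Icc 0 1 = Icc 0 1 := by
  obtain ⟨hcont, -, hmaps, h0, h1⟩ := hT
  refine (image_subset_iff.2 hmaps).antisymm ?_
  simpa [h0, h1] using intermediate_value_Icc zero_le_one hcont

lemma tinv_mem_s17 (hT : InT T) (hx : x ∈ Icc 0 1) : tinv T x ∈ Icc 0 1 :=
  Function.invFunOn_mem (hT.image_Icc.ge hx)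

lemma apply_tinv_s17 (hT : InT T) (hx : x ∈ Icc 0 1) : T (tinv T x) = x :=
  Function.invFunOn_eq (hT.image_Icc.ge hx)

lemma tinv_apply (hT : InT T) (hx : x ∈ Icc 0 1) : tinv T (T x) = x :=
  hT.2.1.injOn.leftInvOn_invFunOn hx

lemma tinv_monotoneOn (hT : InT T) : MonotoneOn (tinv T) (Icc 0 1) := fun x hx y hy hxy =>
  (hT.2.1.le_iff_le (hT.tinv_mem_s17 hx) (hT.tinv_mem_s17 hy)).1 <| by
    rwa [hT.apply_tinv_s17 hx, hT.apply_tinv_s17 hy]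

lemma one_le_of_abs_hasDerivWithinAt_le {T' : ℝ → ℝ} {L : ℝ} (hT : InT T)
    (hT' : ∀ x ∈ Icc (0 : ℝ) 1, HasDerivWithinAt T (T' x) (Icc 0 1) x)
    (hle : ∀ x ∈ Icc (0 : ℝ) 1, |T' x| ≤ L) : 1 ≤ L := by
  simpa [hT.2.2.2.1, hT.2.2.2.2] using
    (convex_Icc (0 : ℝ) 1).norm_image_sub_le_of_norm_hasDerivWithin_le hT' hle
      ⟨le_rfl, zero_le_one⟩ ⟨zero_le_one, le_rfl⟩

lemma contr_mem (hT : InT T) (hα : α ∈ Ico (-1) 0) (hx : x ∈ Icc 0 1) :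
    contr α T x ∈ Icc 0 1 := by
  obtain ⟨ht0, ht1⟩ := hT.tinv_mem_s17 hx
  rw [contr_of_neg hα.2]
  constructor <;> nlinarith [hα.1, hα.2, hx.1, hx.2]

lemma contr_monotoneOn (hT : InT T) (hα : α ∈ Ico (-1) 0) : MonotoneOn (contr α T) (Icc 0 1) := by
  intro x hx y hy hxy
  have htinv := hT.tinv_monotoneOn hx hy hxy
  rw [contr_of_neg hα.2, contr_of_neg hα.2]
  nlinarith [hα.1, hα.2]

lemma aemeasurable_comp_contr {S : ℝ → ℝ} (hT : InT T) (hS : MonotoneOn S (Icc 0 1))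
    (hα : α ∈ Ico (-1) 0) :
    AEMeasurable (fun x => S (contr α T x)) (volume.restrict (Icc 0 1)) :=
  aemeasurable_restrict_of_monotoneOn measurableSet_Icc <|
    hS.comp (hT.contr_monotoneOn hα) fun _ => hT.contr_mem hα

lemma ae_comp_contr_mem {S : ℝ → ℝ} (hT : InT T) (hS : MapsTo S (Icc 0 1) (Icc 0 1))
    (hα : α ∈ Ico (-1) 0) :
    ∀ᵐ x ∂volume.restrict (Icc 0 1), S (contr α T x) ∈ Icc 0 1 := by
  filter_upwards [ae_restrict_mem measurableSet_Icc] with x hx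
  exact hS (hT.contr_mem hα hx)

end InT

theorem sq_mul_integral_sq_tinv_sub_tinv_le {Q T Q' : ℝ → ℝ} {Ll Lu : ℝ} (hLl : 0 ≤ Ll)
    (hQ : InT Q) (hT : InT T)
    (hQ' : ∀ x ∈ Icc (0 : ℝ) 1, HasDerivWithinAt Q (Q' x) (Icc 0 1) x)
    (hQ'_le : ∀ x ∈ Icc (0 : ℝ) 1, |Q' x| ≤ Lu)
    (hT_slope : ∀ u ∈ Icc (0 : ℝ) 1, ∀ v ∈ Icc (0 : ℝ) 1, u ≤ v → Ll * (v - u) ≤ T v - T u) :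
    Ll ^ 2 * ∫ x in Icc 0 1, (tinv Q x - tinv T x) ^ 2 ≤ Lu * ∫ x in Icc 0 1, (Q x - T x) ^ 2 := by
  have hTQ : MonotoneOn (T ∘ tinv Q) (Icc 0 1) :=
    hT.2.1.monotoneOn.comp hQ.tinv_monotoneOn fun _ => hQ.tinv_mem_s17
  have hpointwise : ∀ x ∈ Icc (0 : ℝ) 1,
      Ll ^ 2 * (tinv Q x - tinv T x) ^ 2 ≤ (x - T (tinv Q x)) ^ 2 := by
    intro x hx
    have h := mul_abs_sub_le_abs_sub hT_slope (hT.tinv_mem_s17 hx) (hQ.tinv_mem_s17 hx)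
    rw [hT.apply_tinv_s17 hx] at h
    calc Ll ^ 2 * (tinv Q x - tinv T x) ^ 2 = (Ll * |tinv Q x - tinv T x|) ^ 2 := by
          rw [mul_pow, sq_abs]
      _ ≤ |T (tinv Q x) - x| ^ 2 := pow_le_pow_left₀ (by positivity) h 2
      _ = (x - T (tinv Q x)) ^ 2 := by rw [sq_abs]; ring
  -- substitute `x = Q u`, so that `tinv Q x = u` and `dx = |Q' u| du`
  have hsubst : ∫ x in Icc 0 1, (x - T (tinv Q x)) ^ 2 =
      ∫ u in Icc 0 1, |Q' u| * (Q u - T u) ^ 2 := by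
    have := integral_image_eq_integral_abs_deriv_smul measurableSet_Icc hQ' hQ.2.1.injOn
      fun x => (x - T (tinv Q x)) ^ 2
    rw [hQ.image_Icc] at this
    rw [this]
    refine setIntegral_congr_fun measurableSet_Icc fun u hu => ?_
    simp only [smul_eq_mul, hQ.tinv_apply hu]
  have hQT : IntegrableOn (fun x => (Q x - T x) ^ 2) (Icc 0 1) :=
    ((hQ.1.sub hT.1).pow 2).integrableOn_Icc
  calc Ll ^ 2 * ∫ x in Icc 0 1, (tinv Q x - tinv T x) ^ 2
      = ∫ x in Icc 0 1, Ll ^ 2 * (tinv Q x - tinv T x) ^ 2 := (integral_const_mul _ _).symm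
    _ ≤ ∫ x in Icc 0 1, (x - T (tinv Q x)) ^ 2 := by
        refine setIntegral_mono_on ?_ ?_ measurableSet_Icc hpointwise
        · exact (integrableOn_sq_sub_of_monotoneOn measurableSet_Icc measure_Icc_lt_top
            hQ.tinv_monotoneOn hT.tinv_monotoneOn (fun _ => hQ.tinv_mem_s17)
            (fun _ => hT.tinv_mem_s17)).const_mul _
        · exact integrableOn_sq_sub_of_monotoneOn measurableSet_Icc measure_Icc_lt_top
            monotoneOn_id hTQ (fun _ => id) fun _ hx => hT.2.2.1 (hQ.tinv_mem_s17 hx)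
    _ = ∫ u in Icc 0 1, |Q' u| * (Q u - T u) ^ 2 := hsubst
    _ ≤ ∫ u in Icc 0 1, Lu * (Q u - T u) ^ 2 := by
        refine integral_mono_of_nonneg (ae_of_all _ fun u => by positivity) (hQT.const_mul _) ?_
        filter_upwards [ae_restrict_mem measurableSet_Icc] with u hu
        exact mul_le_mul_of_nonneg_right (hQ'_le u hu) (sq_nonneg _)
    _ = Lu * ∫ u in Icc 0 1, (Q u - T u) ^ 2 := integral_const_mul _ _

theorem integral_sq_tinv_sub_tinv_le {Q T Q' T' : ℝ → ℝ} {Ll Lu : ℝ} (hLl : 0 < Ll)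
    (hQ : InT Q) (hT : InT T)
    (hQ' : ∀ x ∈ Icc (0 : ℝ) 1, HasDerivWithinAt Q (Q' x) (Icc 0 1) x ∧ Ll ≤ Q' x ∧ Q' x ≤ Lu)
    (hT' : ∀ x ∈ Icc (0 : ℝ) 1, HasDerivWithinAt T (T' x) (Icc 0 1) x ∧ Ll ≤ T' x) :
    ∫ x in Icc 0 1, (tinv Q x - tinv T x) ^ 2 ≤
      (Lu / Ll) ^ 2 * ∫ x in Icc 0 1, (Q x - T x) ^ 2 := by
  have hQ'_le : ∀ x ∈ Icc (0 : ℝ) 1, |Q' x| ≤ Lu := fun x hx =>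
    (abs_of_pos (hLl.trans_le (hQ' x hx).2.1)).trans_le (hQ' x hx).2.2
  have hLu : 1 ≤ Lu := hQ.one_le_of_abs_hasDerivWithinAt_le (fun x hx => (hQ' x hx).1) hQ'_le
  have hsharp := sq_mul_integral_sq_tinv_sub_tinv_le hLl.le hQ hT (fun x hx => (hQ' x hx).1)
    hQ'_le ((convex_Icc 0 1).mul_sub_le_sub_of_le_hasDerivWithinAt (fun x hx => (hT' x hx).1)
      fun x hx => (hT' x hx).2)
  have hQT : 0 ≤ ∫ x in Icc (0 : ℝ) 1, (Q x - T x) ^ 2 :=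
    setIntegral_nonneg measurableSet_Icc fun x _ => sq_nonneg _
  rw [div_pow, div_mul_eq_mul_div, le_div_iff₀ (by positivity)]
  nlinarith [mul_nonneg (mul_nonneg (by linarith : (0 : ℝ) ≤ Lu) (sub_nonneg.2 hLu)) hQT]

theorem integral_sq_comp_contr_sub_le {S Q T : ℝ → ℝ} {LS α : ℝ} (hα : α ∈ Ico (-1) 0)
    (hS : ∀ x ∈ Icc (0 : ℝ) 1, ∀ y ∈ Icc (0 : ℝ) 1, |S x - S y| ≤ LS * |x - y|)
    (hQ : InT Q) (hT : InT T) :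
    ∫ x in Icc 0 1, (S (contr α Q x) - S (contr α T x)) ^ 2 ≤
      LS ^ 2 * α ^ 2 * ∫ x in Icc 0 1, (tinv Q x - tinv T x) ^ 2 := by
  have hpointwise : ∀ x ∈ Icc (0 : ℝ) 1, (S (contr α Q x) - S (contr α T x)) ^ 2 ≤
      LS ^ 2 * α ^ 2 * (tinv Q x - tinv T x) ^ 2 := fun x hx => by
    have h := pow_le_pow_left₀ (abs_nonneg _)
      (hS _ (hQ.contr_mem hα hx) _ (hT.contr_mem hα hx)) 2
    rw [sq_abs, mul_pow, sq_abs, contr_sub_contr hα.2] at h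
    linarith
  have hint := integrableOn_sq_sub_of_monotoneOn measurableSet_Icc measure_Icc_lt_top
    hQ.tinv_monotoneOn hT.tinv_monotoneOn (fun _ => hQ.tinv_mem_s17) fun _ => hT.tinv_mem_s17
  rw [← integral_const_mul]
  refine integral_mono_of_nonneg (ae_of_all _ fun x => sq_nonneg _) (hint.const_mul _) ?_
  filter_upwards [ae_restrict_mem measurableSet_Icc] using hpointwise

section RandomMap

variable {Ω X : Type*} [MeasurableSpace Ω] [MeasurableSpace X] {Tε : Ω → ℝ → ℝ}

lemma measurable_apply_projIcc (hcont : ∀ ω, ContinuousOn (Tε ω) (Icc 0 1))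
    (hmeas : Measurable Tε) :
    Measurable fun p : ℝ × Ω => Tε p.2 (projIcc (0 : ℝ) 1 zero_le_one p.1) :=
  measurable_uncurry_of_continuous_of_measurable
    (u := fun t ω => Tε ω (projIcc (0 : ℝ) 1 zero_le_one t))
    (fun ω => (hcont ω).comp_continuous (f := fun t => (projIcc (0 : ℝ) 1 zero_le_one t : ℝ))
      (continuous_subtype_val.comp continuous_projIcc) fun t => (projIcc 0 1 zero_le_one t).2)
    fun _ => measurable_pi_iff.1 hmeas _

theorem integral_integral_sq_sub_le (P : Measure Ω) [IsFiniteMeasure P]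
    (ν : Measure X) [IsFiniteMeasure ν] (hcont : ∀ ω, ContinuousOn (Tε ω) (Icc 0 1))
    (hmaps : ∀ ω, MapsTo (Tε ω) (Icc 0 1) (Icc 0 1)) (hmeas : Measurable Tε) {Lε : ℝ}
    (hlip : ∀ x ∈ Icc (0 : ℝ) 1, ∀ y ∈ Icc (0 : ℝ) 1,
      ∫ ω, (Tε ω x - Tε ω y) ^ 2 ∂P ≤ Lε ^ 2 * (x - y) ^ 2)
    {A B : X → ℝ} (hA : AEMeasurable A ν) (hB : AEMeasurable B ν)
    (hAI : ∀ᵐ x ∂ν, A x ∈ Icc 0 1) (hBI : ∀ᵐ x ∂ν, B x ∈ Icc 0 1) :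
    ∫ ω, ∫ x, (Tε ω (A x) - Tε ω (B x)) ^ 2 ∂ν ∂P ≤ Lε ^ 2 * ∫ x, (A x - B x) ^ 2 ∂ν := by
  -- clamping into `[0,1]` changes nothing `ν`-a.e. and makes the integrand jointly measurable
  set c : ℝ → ℝ := fun t => projIcc (0 : ℝ) 1 zero_le_one t
  set F : Ω → X → ℝ := fun ω x => (Tε ω (c (A x)) - Tε ω (c (B x))) ^ 2
  have hc : ∀ t ∈ Icc (0 : ℝ) 1, c t = t := fun t ht => by simp [c, projIcc_of_mem _ ht]
  have hF_int : Integrable (Function.uncurry F) (P.prod ν) := by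
    have hT {C : X → ℝ} (hC : AEMeasurable C ν) :
        AEMeasurable (fun p : Ω × X => Tε p.1 (c (C p.2))) (P.prod ν) :=
      (measurable_apply_projIcc hcont hmeas).comp_aemeasurable
        (hC.comp_snd.prodMk measurable_fst.aemeasurable)
    refine Integrable.of_bound ?_ 1 (ae_of_all _ fun p => ?_)
    · exact (((hT hA).sub (hT hB)).pow_const 2).aestronglyMeasurable
    · obtain ⟨ha0, ha1⟩ := hmaps p.1 (projIcc 0 1 zero_le_one (A p.2)).2
      obtain ⟨hb0, hb1⟩ := hmaps p.1 (projIcc 0 1 zero_le_one (B p.2)).2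
      rw [Real.norm_eq_abs, abs_of_nonneg (sq_nonneg _)]
      simp only [Function.uncurry, F, c]
      nlinarith
  have hAB_int : Integrable (fun x => Lε ^ 2 * (A x - B x) ^ 2) ν := by
    refine (Integrable.of_bound ((hA.sub hB).pow_const 2).aestronglyMeasurable 1 ?_).const_mul _
    filter_upwards [hAI, hBI] with x ⟨ha0, ha1⟩ ⟨hb0, hb1⟩
    rw [Real.norm_eq_abs, abs_of_nonneg (sq_nonneg _), Pi.sub_apply]
    nlinarith
  calc ∫ ω, ∫ x, (Tε ω (A x) - Tε ω (B x)) ^ 2 ∂ν ∂P = ∫ ω, ∫ x, F ω x ∂ν ∂P := by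
        refine integral_congr_ae (ae_of_all _ fun ω => integral_congr_ae ?_)
        filter_upwards [hAI, hBI] with x hAx hBx
        simp only [F, hc _ hAx, hc _ hBx]
    _ = ∫ x, ∫ ω, F ω x ∂P ∂ν := integral_integral_swap hF_int
    _ ≤ ∫ x, Lε ^ 2 * (A x - B x) ^ 2 ∂ν := by
        refine integral_mono_of_nonneg (ae_of_all _ fun x => integral_nonneg fun ω => ?_)
          hAB_int ?_
        · positivity
        filter_upwards [hAI, hBI] with x hAx hBx
        simp only [F, hc _ hAx, hc _ hBx]
        exact hlip _ hAx _ hBx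
    _ = Lε ^ 2 * ∫ x, (A x - B x) ^ 2 ∂ν := integral_const_mul _ _

end RandomMap

theorem negative_alpha_contraction_general {Ω : Type*} [MeasurableSpace Ω]
    (P : Measure Ω) [IsProbabilityMeasure P]
    (Ll Lu : ℝ) (hLl : 0 < Ll)
    (α : ℝ) (hα : α ∈ Set.Ico (-1 : ℝ) 0)
    (S : ℝ → ℝ) (hS : InT S) (LS : ℝ)
    (hSlip : ∀ x ∈ Set.Icc (0:ℝ) 1, ∀ y ∈ Set.Icc (0:ℝ) 1, |S x - S y| ≤ LS * |x - y|)
    (Tε : Ω → ℝ → ℝ) (hTε : ∀ ω, InT (Tε ω)) (hTεmeas : Measurable Tε)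
    (Lε : ℝ)
    (hεlip : ∀ x ∈ Set.Icc (0:ℝ) 1, ∀ y ∈ Set.Icc (0:ℝ) 1,
      ∫ ω, (Tε ω x - Tε ω y)^2 ∂P ≤ Lε^2 * (x - y)^2) :
    ∀ (Q T Q' T' : ℝ → ℝ), InT Q → InT T →
      (∀ x ∈ Set.Icc (0:ℝ) 1,
        HasDerivWithinAt Q (Q' x) (Set.Icc (0:ℝ) 1) x ∧ Ll ≤ Q' x ∧ Q' x ≤ Lu) →
      (∀ x ∈ Set.Icc (0:ℝ) 1,
        HasDerivWithinAt T (T' x) (Set.Icc (0:ℝ) 1) x ∧ Ll ≤ T' x ∧ T' x ≤ Lu) →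
      (∫ ω, (∫ x in (0:ℝ)..1, (Tε ω (S (contr α Q x)) - Tε ω (S (contr α T x)))^2) ∂P)
        ≤ α^2 * LS^2 * Lε^2 * (Lu / Ll)^2 * ∫ x in (0:ℝ)..1, (Q x - T x)^2 := by
  intro Q T Q' T' hQ hT hQ' hT'
  have hrand := integral_integral_sq_sub_le P (volume.restrict (Icc 0 1)) (fun ω => (hTε ω).1)
    (fun ω => (hTε ω).2.2.1) hTεmeas hεlip (hQ.aemeasurable_comp_contr hS.2.1.monotoneOn hα)
    (hT.aemeasurable_comp_contr hS.2.1.monotoneOn hα) (hQ.ae_comp_contr_mem hS.2.2.1 hα)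
    (hT.ae_comp_contr_mem hS.2.2.1 hα)
  have hcontr := integral_sq_comp_contr_sub_le hα hSlip hQ hT
  have hinv := integral_sq_tinv_sub_tinv_le hLl hQ hT hQ' fun x hx => ⟨(hT' x hx).1, (hT' x hx).2.1⟩
  simp only [intervalIntegral.integral_of_le zero_le_one, ← integral_Icc_eq_integral_Ioc]
  calc _ ≤ Lε ^ 2 * ∫ x in Icc 0 1, (S (contr α Q x) - S (contr α T x)) ^ 2 := hrand
    _ ≤ Lε ^ 2 * (LS ^ 2 * α ^ 2 * ((Lu / Ll) ^ 2 * ∫ x in Icc 0 1, (Q x - T x) ^ 2)) := by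
        gcongr
        exact hcontr.trans (by gcongr)
    _ = _ := by ring

/-- for `α ∈ [−1,0)`, `S` an `L_S`-Lipschitz element of 𝒯, noise `T_ε` with
square-mean Lipschitz constant `L_ε`, and `Q, T ∈ 𝒯_{l,u}`:
`E‖T_ε∘S∘[αQ] − T_ε∘S∘[αT]‖₂² ≤ α² L_S² L_ε² (L_u/L_l)² ‖Q − T‖₂²`. -/
theorem negative_alpha_contraction {Ω : Type*} [MeasurableSpace Ω]
    (P : Measure Ω) [IsProbabilityMeasure P]
    (Ll Lu : ℝ) (hLl : 0 < Ll) (hLu : Ll ≤ Lu)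
    (α : ℝ) (hα : α ∈ Set.Ico (-1 : ℝ) 0)
    (S : ℝ → ℝ) (hS : InT S) (LS : ℝ) (hLS : 0 ≤ LS)
    (hSlip : ∀ x ∈ Set.Icc (0:ℝ) 1, ∀ y ∈ Set.Icc (0:ℝ) 1, |S x - S y| ≤ LS * |x - y|)
    (Tε : Ω → ℝ → ℝ) (hTε : ∀ ω, InT (Tε ω)) (hTεmeas : Measurable Tε)
    (Lε : ℝ) (hLε : 0 ≤ Lε)
    (hεlip : ∀ x ∈ Set.Icc (0:ℝ) 1, ∀ y ∈ Set.Icc (0:ℝ) 1,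
      ∫ ω, (Tε ω x - Tε ω y)^2 ∂P ≤ Lε^2 * (x - y)^2) :
    ∀ (Q T Q' T' : ℝ → ℝ), InT Q → InT T →
      (∀ x ∈ Set.Icc (0:ℝ) 1,
        HasDerivWithinAt Q (Q' x) (Set.Icc (0:ℝ) 1) x ∧ Ll ≤ Q' x ∧ Q' x ≤ Lu) →
      (∀ x ∈ Set.Icc (0:ℝ) 1,
        HasDerivWithinAt T (T' x) (Set.Icc (0:ℝ) 1) x ∧ Ll ≤ T' x ∧ T' x ≤ Lu) →
      (∫ ω, (∫ x in (0:ℝ)..1, (Tε ω (S (contr α Q x)) - Tε ω (S (contr α T x)))^2) ∂P)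
        ≤ α^2 * LS^2 * Lε^2 * (Lu / Ll)^2 * ∫ x in (0:ℝ)..1, (Q x - T x)^2 :=
  negative_alpha_contraction_general P Ll Lu hLl α hα S hS LS hSlip Tε hTε hTεmeas Lε hεlip
end
end
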